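/- arXiv:2309.09520 — 4 statements merged into one kernel-verified Lean document; each statement's English description precedes it below -/
import Mathlib

section
/- Let α, β, γ, μ, ν ≥ 0 and τ with 0 < τ ≤ 1. Assume |γα - βν| < γ < 1, β(μ+ν) < (γ-1)(α-1), and τ < 2(1-γ)/(β(μ+ν) - (γ-1)(α+1)). Then |γ|1-τ| + τ(γα - βν)| < 1 and τ(μβ + βν) < (γ-1)(|1-τ| + τα - 1). -/
theorem stmt_11 (α β γ μ ν τ : ℝ)
    (hα : 0 ≤ α) (hβ : 0 ≤ β) (hγ : 0 ≤ γ) (hμ : 0 ≤ μ) (hν : 0 ≤ ν)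
    (hτ0 : 0 < τ) (hτ1 : τ ≤ 1)
    (h1 : |γ * α - β * ν| < γ) (h2 : γ < 1)
    (h3 : β * (μ + ν) < (γ - 1) * (α - 1))
    (h4 : τ < 2 * (1 - γ) / (β * (μ + ν) - (γ - 1) * (α + 1))) :
    |γ * |1 - τ| + τ * (γ * α - β * ν)| < 1 ∧
      τ * (μ * β + β * ν) < (γ - 1) * (|1 - τ| + τ * α - 1) := by
  have habs : |1 - τ| = 1 - τ := abs_of_nonneg (by linarith)
  rw [habs]
  constructor
  · rw [abs_lt] at h1 ⊢
    constructor <;> nlinarith [h1.1, h1.2]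
  · nlinarith [mul_lt_mul_of_pos_left h3 hτ0]
end

section
/- Let A, B ∈ R^{n×n} with A invertible and ‖A^{-1}B‖ < 1 (operator 2-norm). Then for every c ∈ R^n the equation Ax - B|x| - c = 0 has a unique solution x ∈ R^n. -/
/-- Euclidean (2-)norm of a vector in ℝ^n. -/
noncomputable def vnorm {n : ℕ} (x : Fin n → ℝ) : ℝ := Real.sqrt (∑ i, (x i) ^ 2)

/-- Operator norm of a real n×n matrix induced by the Euclidean vector norm. -/
noncomputable def opNorm {n : ℕ} (U : Matrix (Fin n) (Fin n) ℝ) : ℝ :=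
  sSup {r : ℝ | ∃ x : Fin n → ℝ, vnorm x = 1 ∧ r = vnorm (U.mulVec x)}

/-- Spectral radius of a real n×n matrix: the supremum of the moduli of its
complex eigenvalues (roots of the characteristic polynomial over ℂ). -/
noncomputable def specRad {n : ℕ} (U : Matrix (Fin n) (Fin n) ℝ) : ℝ :=
  sSup {r : ℝ | ∃ z : ℂ, (U.map (Complex.ofReal : ℝ → ℂ)).charpoly.IsRoot z ∧ r = ‖z‖}

noncomputable def toE {n : ℕ} (x : Fin n → ℝ) : EuclideanSpace ℝ (Fin n) :=
  (WithLp.equiv 2 (Fin n → ℝ)).symm x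

lemma vnorm_eq_norm {n : ℕ} (x : Fin n → ℝ) : vnorm x = ‖toE x‖ := by
  rw [EuclideanSpace.norm_eq, vnorm]
  congr 1
  apply Finset.sum_congr rfl
  intro i _
  rw [Real.norm_eq_abs, sq_abs]
  rfl

noncomputable def clm {n : ℕ} (U : Matrix (Fin n) (Fin n) ℝ) :
    EuclideanSpace ℝ (Fin n) →L[ℝ] EuclideanSpace ℝ (Fin n) :=
  LinearMap.toContinuousLinearMap (Matrix.toEuclideanLin U)

lemma clm_apply {n : ℕ} (U : Matrix (Fin n) (Fin n) ℝ) (x : Fin n → ℝ) :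
    clm U (toE x) = toE (U.mulVec x) := rfl

lemma toE_smul {n : ℕ} (a : ℝ) (x : Fin n → ℝ) : toE (a • x) = a • toE x := rfl

lemma vnorm_mulVec_le {n : ℕ} (U : Matrix (Fin n) (Fin n) ℝ) (x : Fin n → ℝ) :
    vnorm (U.mulVec x) ≤ opNorm U * vnorm x := by
  have hbdd : BddAbove {r : ℝ | ∃ x : Fin n → ℝ, vnorm x = 1 ∧ r = vnorm (U.mulVec x)} := by
    refine ⟨‖clm U‖, ?_⟩
    rintro r ⟨y, hy1, rfl⟩
    calc vnorm (U.mulVec y) = ‖clm U (toE y)‖ := by rw [clm_apply, vnorm_eq_norm]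
      _ ≤ ‖clm U‖ * ‖toE y‖ := (clm U).le_opNorm _
      _ = ‖clm U‖ := by rw [← vnorm_eq_norm, hy1, mul_one]
  by_cases hx : vnorm x = 0
  · have hx0 : toE x = 0 := by rw [← norm_eq_zero, ← vnorm_eq_norm]; exact hx
    have hx0' : x = 0 := by
      have := congrArg (WithLp.equiv 2 (Fin n → ℝ)) hx0
      simpa [toE] using this
    subst hx0'
    simp [Matrix.mulVec_zero, vnorm, Real.sqrt_zero]
  · have hxpos : 0 < vnorm x := lt_of_le_of_ne (Real.sqrt_nonneg _) (Ne.symm hx)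
    set t := vnorm x with ht
    have hmem : t⁻¹ * vnorm (U.mulVec x) ∈
        {r : ℝ | ∃ x : Fin n → ℝ, vnorm x = 1 ∧ r = vnorm (U.mulVec x)} := by
      refine ⟨t⁻¹ • x, ?_, ?_⟩
      · rw [vnorm_eq_norm, toE_smul, norm_smul, ← vnorm_eq_norm, ← ht,
          Real.norm_eq_abs, abs_of_pos (inv_pos.mpr hxpos), inv_mul_cancel₀ hx]
      · rw [Matrix.mulVec_smul]
        conv_rhs => rw [vnorm_eq_norm, toE_smul, norm_smul]
        rw [← vnorm_eq_norm, Real.norm_eq_abs, abs_of_pos (inv_pos.mpr hxpos)]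
    have hle : t⁻¹ * vnorm (U.mulVec x) ≤ opNorm U := le_csSup hbdd hmem
    have h2 := mul_le_mul_of_nonneg_left hle (le_of_lt hxpos)
    rw [← mul_assoc, mul_inv_cancel₀ hx, one_mul] at h2
    calc vnorm (U.mulVec x) ≤ t * opNorm U := h2
      _ = opNorm U * t := mul_comm _ _

lemma vnorm_mono {n : ℕ} (u v : Fin n → ℝ) (h : ∀ i, |u i| ≤ |v i|) : vnorm u ≤ vnorm v := by
  apply Real.sqrt_le_sqrt
  apply Finset.sum_le_sum
  intro i _
  rw [← sq_abs (u i), ← sq_abs (v i)]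
  exact pow_le_pow_left₀ (abs_nonneg _) (h i) 2


theorem stmt_14 (n : ℕ) (A B : Matrix (Fin n) (Fin n) ℝ) (hA : IsUnit A.det)
    (h : opNorm (A⁻¹ * B) < 1) (c : Fin n → ℝ) :
    ∃! x : Fin n → ℝ, A.mulVec x - B.mulVec (fun i => |x i|) - c = 0 := by
  set M := A⁻¹ * B with hM
  set d := (A⁻¹).mulVec c with hd
  -- the equation is equivalent to a fixed-point equation
  have hiff : ∀ x : Fin n → ℝ,
      (A.mulVec x - B.mulVec (fun i => |x i|) - c = 0) ↔
        x = M.mulVec (fun i => |x i|) + d := by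
    intro x
    rw [sub_sub, sub_eq_zero]
    constructor
    · intro hx
      calc x = A⁻¹.mulVec (A.mulVec x) := by
              rw [Matrix.mulVec_mulVec, Matrix.nonsing_inv_mul A hA, Matrix.one_mulVec]
        _ = A⁻¹.mulVec ((B.mulVec fun i => |x i|) + c) := by rw [hx]
        _ = (M.mulVec fun i => |x i|) + d := by
              rw [Matrix.mulVec_add, Matrix.mulVec_mulVec, hM, hd]
    · intro hx
      have h1 : A * M = B := by
        rw [hM, ← Matrix.mul_assoc, Matrix.mul_nonsing_inv A hA, Matrix.one_mul]
      have h2 : A.mulVec d = c := by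
        rw [hd, Matrix.mulVec_mulVec, Matrix.mul_nonsing_inv A hA, Matrix.one_mulVec]
      conv_lhs => rw [hx]
      rw [Matrix.mulVec_add, Matrix.mulVec_mulVec, h1, h2]
  -- set up the contraction on Euclidean space
  let E := EuclideanSpace ℝ (Fin n)
  let eqv := WithLp.equiv 2 (Fin n → ℝ)
  let g : (Fin n → ℝ) → (Fin n → ℝ) := fun x => M.mulVec (fun i => |x i|) + d
  let f : E → E := fun z => toE (g (eqv z))
  have hnorm : ∀ w : E, ‖w‖ = vnorm (eqv w) := by
    intro w
    rw [vnorm_eq_norm]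
    congr 1
  have hKnn : (0 : ℝ) ≤ max (opNorm M) 0 := le_max_right _ _
  set K : NNReal := ⟨max (opNorm M) 0, hKnn⟩ with hK
  have hK1 : K < 1 := by
    rw [← NNReal.coe_lt_coe, NNReal.coe_one, hK]
    exact max_lt h one_pos
  have hlip : LipschitzWith K f := by
    apply LipschitzWith.of_dist_le_mul
    intro x y
    rw [dist_eq_norm, dist_eq_norm, hnorm, hnorm]
    have hfx : eqv (f x) - eqv (f y)
        = M.mulVec ((fun i => |eqv x i|) - fun i => |eqv y i|) := by
      show g (eqv x) - g (eqv y) = _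
      simp only [g, Matrix.mulVec_sub]
      abel
    rw [show eqv (f x - f y) = eqv (f x) - eqv (f y) from rfl, hfx]
    calc vnorm (M.mulVec ((fun i => |eqv x i|) - fun i => |eqv y i|))
        ≤ opNorm M * vnorm ((fun i => |eqv x i|) - fun i => |eqv y i|) :=
          vnorm_mulVec_le _ _
      _ ≤ (K : ℝ) * vnorm ((fun i => |eqv x i|) - fun i => |eqv y i|) := by
          apply mul_le_mul_of_nonneg_right (le_max_left _ _) (Real.sqrt_nonneg _)
      _ ≤ (K : ℝ) * vnorm (eqv x - eqv y) := by
          apply mul_le_mul_of_nonneg_left _ hKnn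
          apply vnorm_mono
          intro i
          have : |eqv x i| - |eqv y i| = ((fun i => |eqv x i|) - fun i => |eqv y i|) i := rfl
          rw [show ((fun i => |eqv x i|) - fun i => |eqv y i|) i
              = |eqv x i| - |eqv y i| from rfl,
            show (eqv x - eqv y) i = eqv x i - eqv y i from rfl]
          exact abs_abs_sub_abs_le_abs_sub _ _
      _ = (K : ℝ) * vnorm (eqv (x - y)) := rfl
  have hcontr : ContractingWith K f := ⟨hK1, hlip⟩
  -- fixed point iff
  have hfix : ∀ z : E, Function.IsFixedPt f z ↔
      (eqv z = M.mulVec (fun i => |eqv z i|) + d) := by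
    intro z
    constructor
    · intro hz
      have : eqv (f z) = eqv z := congrArg eqv hz
      rw [show eqv (f z) = g (eqv z) from rfl] at this
      exact this.symm
    · intro hz
      show toE (g (eqv z)) = z
      rw [show g (eqv z) = M.mulVec (fun i => |eqv z i|) + d from rfl, ← hz]
      rfl
  refine ⟨eqv (ContractingWith.fixedPoint f hcontr), ?_, ?_⟩
  · exact (hiff _).mpr ((hfix _).mp (ContractingWith.fixedPoint_isFixedPt hcontr))
  · intro y hy
    rw [hiff] at hy
    have hyfix : Function.IsFixedPt f (toE y) := by
      rw [hfix]
      exact hy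
    have := ContractingWith.fixedPoint_unique hcontr hyfix
    rw [← this]
    rfl
end

section
/- For A = 3I and B = [[-2, 1], [1, 2]] (2×2), the matrix A^{-1}B = (1/3)[[-2,1],[1,2]] satisfies ‖A^{-1}B‖ = √5/3 < 1 while ρ(|A^{-1}B|) = 1. -/
lemma aux_prod : ((3 : ℝ) • (1 : Matrix (Fin 2) (Fin 2) ℝ))⁻¹ * !![-2, 1; 1, 2]
    = (1 / 3 : ℝ) • !![-2, 1; 1, 2] := by
  have hinv : ((3 : ℝ) • (1 : Matrix (Fin 2) (Fin 2) ℝ))⁻¹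
      = (1 / 3 : ℝ) • (1 : Matrix (Fin 2) (Fin 2) ℝ) := by
    apply Matrix.inv_eq_left_inv
    rw [Matrix.smul_mul, Matrix.mul_smul, one_mul, smul_smul]
    norm_num
  rw [hinv, Matrix.smul_mul, one_mul]

lemma aux_mv0 (x : Fin 2 → ℝ) : ((1 / 3 : ℝ) • !![(-2:ℝ), 1; 1, 2]).mulVec x 0
    = (-2/3) * x 0 + (1/3) * x 1 := by
  simp only [Matrix.mulVec, dotProduct, Fin.sum_univ_two, Matrix.smul_apply,
    smul_eq_mul, Matrix.cons_val', Matrix.cons_val_zero, Matrix.cons_val_one,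
    Matrix.head_cons, Matrix.empty_val', Matrix.cons_val_fin_one, Matrix.of_apply]
  ring

lemma aux_mv1 (x : Fin 2 → ℝ) : ((1 / 3 : ℝ) • !![(-2:ℝ), 1; 1, 2]).mulVec x 1
    = (1/3) * x 0 + (2/3) * x 1 := by
  simp only [Matrix.mulVec, dotProduct, Fin.sum_univ_two, Matrix.smul_apply,
    smul_eq_mul, Matrix.cons_val', Matrix.cons_val_zero, Matrix.cons_val_one,
    Matrix.head_cons, Matrix.empty_val', Matrix.cons_val_fin_one, Matrix.of_apply,
    Matrix.vecHead, Matrix.vecTail]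
  ring

lemma aux_sqrt59 : Real.sqrt (5/9) = Real.sqrt 5 / 3 := by
  have h : (Real.sqrt 5 / 3)^2 = 5/9 := by
    rw [div_pow, Real.sq_sqrt (by norm_num : (0:ℝ) ≤ 5)]; norm_num
  rw [← h, Real.sqrt_sq (by positivity)]

lemma aux_opNorm : opNorm ((1 / 3 : ℝ) • !![-2, 1; 1, 2]) = Real.sqrt 5 / 3 := by
  have hset : {r : ℝ | ∃ x : Fin 2 → ℝ, vnorm x = 1 ∧
      r = vnorm (((1 / 3 : ℝ) • !![-2, 1; 1, 2]).mulVec x)} = {Real.sqrt 5 / 3} := by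
    ext r
    simp only [Set.mem_setOf_eq, Set.mem_singleton_iff]
    constructor
    · rintro ⟨x, hx, rfl⟩
      have h0 : (0:ℝ) ≤ (x 0) ^ 2 + (x 1) ^ 2 := by positivity
      have hx' : (x 0) ^ 2 + (x 1) ^ 2 = 1 := by
        unfold vnorm at hx
        rw [Fin.sum_univ_two] at hx
        nlinarith [Real.sq_sqrt h0, hx]
      unfold vnorm
      rw [Fin.sum_univ_two, aux_mv0, aux_mv1]
      have h5 : ((-2/3) * x 0 + (1/3) * x 1) ^ 2 + ((1/3) * x 0 + (2/3) * x 1) ^ 2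
          = 5 / 9 := by nlinarith [hx']
      rw [h5, aux_sqrt59]
    · rintro rfl
      refine ⟨![1, 0], ?_, ?_⟩
      · unfold vnorm
        rw [Fin.sum_univ_two]
        norm_num
      · unfold vnorm
        rw [Fin.sum_univ_two, aux_mv0, aux_mv1]
        have h : ((-2:ℝ)/3 * (![1,0] : Fin 2 → ℝ) 0 + 1/3 * (![1,0] : Fin 2 → ℝ) 1)^2
            + ((1:ℝ)/3 * (![1,0] : Fin 2 → ℝ) 0 + 2/3 * (![1,0] : Fin 2 → ℝ) 1)^2 = 5/9 := by
          norm_num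
        rw [h, aux_sqrt59]
  unfold opNorm
  rw [hset, csSup_singleton]

lemma aux_specRad : specRad (((1 / 3 : ℝ) • !![-2, 1; 1, 2]).map fun t => |t|) = 1 := by
  have habs : (((1 / 3 : ℝ) • !![(-2:ℝ), 1; 1, 2]).map fun t => |t|)
      = !![2/3, 1/3; 1/3, 2/3] := by
    ext i j
    fin_cases i <;> fin_cases j <;>
      simp [Matrix.map_apply] <;> norm_num [abs_of_nonneg, abs_of_nonpos]
  have hmapC : ((!![(2:ℝ)/3, 1/3; 1/3, 2/3]).map (Complex.ofReal : ℝ → ℂ))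
      = !![(2/3 : ℂ), 1/3; 1/3, 2/3] := by
    ext i j
    fin_cases i <;> fin_cases j <;> simp [Matrix.map_apply]
  have hroot : ∀ z : ℂ, (!![(2/3 : ℂ), 1/3; 1/3, 2/3]).charpoly.IsRoot z ↔
      (z = 1 ∨ z = 1/3) := by
    intro z
    simp only [Matrix.charpoly, Matrix.det_fin_two, Matrix.charmatrix_apply, Polynomial.IsRoot,
      Matrix.diagonal_apply_eq, Matrix.cons_val', Matrix.cons_val_zero,
      Matrix.cons_val_one, Matrix.head_cons, Matrix.empty_val', Matrix.cons_val_fin_one,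
      Matrix.of_apply, Matrix.vecHead, Matrix.vecTail, Matrix.diagonal,
      Polynomial.eval_sub, Polynomial.eval_mul, Polynomial.eval_X, Polynomial.eval_C]
    norm_num
    constructor
    · intro h
      have h2 : (z - 1) * (z - 1/3) = 0 := by linear_combination h
      rcases mul_eq_zero.mp h2 with h1 | h1
      · exact Or.inl (by linear_combination h1)
      · exact Or.inr (by linear_combination h1)
    · rintro (rfl | rfl) <;> ring
  have hset : {r : ℝ | ∃ z : ℂ,
      ((((1 / 3 : ℝ) • !![(-2:ℝ), 1; 1, 2]).map fun t => |t|).map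
        (Complex.ofReal : ℝ → ℂ)).charpoly.IsRoot z ∧ r = ‖z‖}
      = {1, 1/3} := by
    rw [habs, hmapC]
    ext r
    simp only [Set.mem_setOf_eq, Set.mem_insert_iff, Set.mem_singleton_iff]
    constructor
    · rintro ⟨z, hz, rfl⟩
      rcases (hroot z).mp hz with rfl | rfl
      · left; simp
      · right; simp [map_div₀]
    · rintro (rfl | rfl)
      · exact ⟨1, (hroot 1).mpr (Or.inl rfl), by simp⟩
      · exact ⟨1/3, (hroot (1/3)).mpr (Or.inr rfl), by simp [map_div₀]⟩
  unfold specRad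
  rw [hset, csSup_pair]
  rw [sup_eq_left.mpr (by norm_num : (1:ℝ)/3 ≤ 1)]

theorem stmt_16 :
    let A : Matrix (Fin 2) (Fin 2) ℝ := (3 : ℝ) • (1 : Matrix (Fin 2) (Fin 2) ℝ)
    let B : Matrix (Fin 2) (Fin 2) ℝ := !![-2, 1; 1, 2]
    A⁻¹ * B = (1 / 3 : ℝ) • !![-2, 1; 1, 2] ∧
      opNorm (A⁻¹ * B) = Real.sqrt 5 / 3 ∧
      opNorm (A⁻¹ * B) < 1 ∧
      specRad ((A⁻¹ * B).map fun t => |t|) = 1 := by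
  intro A B
  have h1 : A⁻¹ * B = (1 / 3 : ℝ) • !![-2, 1; 1, 2] := aux_prod
  refine ⟨h1, ?_, ?_, ?_⟩
  · rw [h1]; exact aux_opNorm
  · rw [h1, aux_opNorm]
    rw [div_lt_one (by norm_num : (0:ℝ) < 3)]
    nlinarith [Real.sq_sqrt (by norm_num : (0:ℝ) ≤ 5), Real.sqrt_nonneg (5:ℝ)]
  · rw [h1]; exact aux_specRad
end

section
/- Let A, B ∈ R^{n×n}, c ∈ R^n, Ω ∈ R^{n×n} with A + Ω invertible, and suppose ‖(A+Ω)^{-1}Ω‖ + ‖(A+Ω)^{-1}B‖ < 1 (operator 2-norm). Then the equation Ax - B|x| - c = 0 has a unique solution x*, and for any initial x^0 the iteration x^{k+1} = (A+Ω)^{-1}(Ω x^k + B|x^k| + c) converges to x*. -/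
noncomputable def mclm {n : ℕ} (U : Matrix (Fin n) (Fin n) ℝ) :
    EuclideanSpace ℝ (Fin n) →L[ℝ] EuclideanSpace ℝ (Fin n) :=
  LinearMap.toContinuousLinearMap (Matrix.toEuclideanLin U)

noncomputable def eabs {n : ℕ} (x : EuclideanSpace ℝ (Fin n)) : EuclideanSpace ℝ (Fin n) :=
  WithLp.toLp 2 (fun i => |x i|)

lemma vnorm_eq {n : ℕ} (x : EuclideanSpace ℝ (Fin n)) : vnorm x = ‖x‖ := by
  rw [EuclideanSpace.norm_eq]
  simp [vnorm, sq_abs]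

lemma opNorm_eq_norm_mclm {n : ℕ} (U : Matrix (Fin n) (Fin n) ℝ) :
    opNorm U = ‖mclm U‖ := by
  rcases Nat.eq_zero_or_pos n with hn | hn
  · subst hn
    have hS : {r : ℝ | ∃ x : Fin 0 → ℝ, vnorm x = 1 ∧ r = vnorm (U.mulVec x)} = ∅ := by
      ext r
      simp only [Set.mem_setOf_eq, Set.mem_empty_iff_false, iff_false]
      rintro ⟨x, hx, -⟩
      simp [vnorm] at hx
    have h0 : ∀ x : EuclideanSpace ℝ (Fin 0), mclm U x = 0 := fun x => PiLp.ext fun i => i.elim0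
    have hnorm : ‖mclm U‖ = 0 := by
      refine le_antisymm ((mclm U).opNorm_le_bound le_rfl fun x => ?_) (norm_nonneg _)
      rw [h0 x, norm_zero, zero_mul]
    unfold opNorm
    rw [hS, Real.sSup_empty, hnorm]
  · set S := {r : ℝ | ∃ x : Fin n → ℝ, vnorm x = 1 ∧ r = vnorm (U.mulVec x)} with hS
    have hmem : ∀ r ∈ S, r ≤ ‖mclm U‖ := by
      rintro r ⟨x, hx, rfl⟩
      set X : EuclideanSpace ℝ (Fin n) := WithLp.toLp 2 x with hX
      have hx' : ‖X‖ = 1 := by rw [← vnorm_eq]; exact hx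
      calc vnorm (U.mulVec x) = ‖mclm U X‖ := vnorm_eq (mclm U X)
        _ ≤ ‖mclm U‖ * ‖X‖ := (mclm U).le_opNorm _
        _ = ‖mclm U‖ := by rw [hx', mul_one]
    have hbdd : BddAbove S := ⟨‖mclm U‖, hmem⟩
    set e : EuclideanSpace ℝ (Fin n) := EuclideanSpace.single (⟨0, hn⟩ : Fin n) (1:ℝ) with he
    have hone : vnorm e = 1 := by rw [vnorm_eq, he]; simp
    have hSne : S.Nonempty := ⟨vnorm (U.mulVec e), e, hone, rfl⟩
    have hSnonneg : (0:ℝ) ≤ sSup S := by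
      obtain ⟨r, hr⟩ := hSne
      have hr0 : (0:ℝ) ≤ r := by
        obtain ⟨x, -, rfl⟩ := hr
        exact Real.sqrt_nonneg _
      exact hr0.trans (le_csSup hbdd hr)
    have hSne : S.Nonempty := ⟨vnorm (U.mulVec e), e, hone, rfl⟩
    refine le_antisymm (csSup_le hSne hmem) ?_
    refine (mclm U).opNorm_le_bound hSnonneg ?_
    intro x
    rcases eq_or_ne x 0 with rfl | hx
    · simp
    · have hxn : ‖x‖ ≠ 0 := norm_ne_zero_iff.mpr hx
      set u : EuclideanSpace ℝ (Fin n) := ‖x‖⁻¹ • x with hu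
      have hun : ‖u‖ = 1 := by
        rw [hu, norm_smul, norm_inv, norm_norm, inv_mul_cancel₀ hxn]
      have humem : ‖mclm U u‖ ∈ S :=
        ⟨u, by rw [← hun]; exact vnorm_eq u, (vnorm_eq (mclm U u)).symm⟩
      have hsplit : ‖mclm U x‖ = ‖x‖ * ‖mclm U u‖ := by
        rw [hu, map_smul, norm_smul, norm_inv, norm_norm, ← mul_assoc,
          mul_inv_cancel₀ hxn, one_mul]
      rw [hsplit, mul_comm]
      exact mul_le_mul_of_nonneg_right (le_csSup hbdd humem) (norm_nonneg x)

lemma norm_eabs_sub_eabs_le {n : ℕ} (x y : EuclideanSpace ℝ (Fin n)) :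
    ‖eabs x - eabs y‖ ≤ ‖x - y‖ := by
  rw [EuclideanSpace.norm_eq, EuclideanSpace.norm_eq]
  apply Real.sqrt_le_sqrt
  apply Finset.sum_le_sum
  intro i _
  have h1 : (eabs x - eabs y) i = |x i| - |y i| := rfl
  have h2 : (x - y) i = x i - y i := rfl
  rw [h1, h2, Real.norm_eq_abs, Real.norm_eq_abs]
  exact pow_le_pow_left₀ (abs_nonneg _) (abs_abs_sub_abs_le_abs_sub _ _) 2

theorem stmt_17 (n : ℕ) (A B Ω : Matrix (Fin n) (Fin n) ℝ) (c : Fin n → ℝ)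
    (hinv : IsUnit (A + Ω).det)
    (h : opNorm ((A + Ω)⁻¹ * Ω) + opNorm ((A + Ω)⁻¹ * B) < 1) :
    ∃ xs : Fin n → ℝ,
      (A.mulVec xs - B.mulVec (fun i => |xs i|) - c = 0) ∧
      (∀ x : Fin n → ℝ, A.mulVec x - B.mulVec (fun i => |x i|) - c = 0 → x = xs) ∧
      ∀ x0 : Fin n → ℝ,
        Filter.Tendsto
          (fun k => (fun x => (A + Ω)⁻¹.mulVec (Ω.mulVec x + B.mulVec (fun i => |x i|) + c))^[k] x0)
          Filter.atTop (nhds xs) := by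
  set M₁ := (A + Ω)⁻¹ * Ω with hM₁
  set M₂ := (A + Ω)⁻¹ * B with hM₂
  set f : EuclideanSpace ℝ (Fin n) → EuclideanSpace ℝ (Fin n) :=
    fun x => WithLp.toLp 2 ((A + Ω)⁻¹.mulVec (Ω.mulVec x + B.mulVec (fun i => |x i|) + c) : Fin n → ℝ)
    with hfdef
  have hk1 : (0:ℝ) ≤ opNorm M₁ := by rw [opNorm_eq_norm_mclm]; exact norm_nonneg _
  have hk2 : (0:ℝ) ≤ opNorm M₂ := by rw [opNorm_eq_norm_mclm]; exact norm_nonneg _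
  set K : NNReal := ⟨opNorm M₁ + opNorm M₂, add_nonneg hk1 hk2⟩ with hK
  have hcontr : ContractingWith K f := by
    constructor
    · exact_mod_cast h
    · apply LipschitzWith.of_dist_le_mul
      intro x y
      rw [dist_eq_norm, dist_eq_norm]
      have hxy : f x - f y = mclm M₁ (x - y) + mclm M₂ (eabs x - eabs y) := by
        show WithLp.toLp 2 ((A + Ω)⁻¹.mulVec (Ω.mulVec x + B.mulVec (eabs x) + c)
            - (A + Ω)⁻¹.mulVec (Ω.mulVec y + B.mulVec (eabs y) + c) : Fin n → ℝ)
          = WithLp.toLp 2 (M₁.mulVec (x.ofLp - y.ofLp) + M₂.mulVec ((eabs x).ofLp - (eabs y).ofLp))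
        congr 1
        rw [hM₁, hM₂, ← Matrix.mulVec_mulVec, ← Matrix.mulVec_mulVec,
          ← Matrix.mulVec_add, ← Matrix.mulVec_sub]
        congr 1
        rw [Matrix.mulVec_sub Ω, Matrix.mulVec_sub B]
        abel
      calc ‖f x - f y‖
          ≤ ‖mclm M₁ (x - y)‖ + ‖mclm M₂ (eabs x - eabs y)‖ := by
            rw [hxy]; exact norm_add_le _ _
        _ ≤ ‖mclm M₁‖ * ‖x - y‖ + ‖mclm M₂‖ * ‖x - y‖ := by
            refine add_le_add ((mclm M₁).le_opNorm _) ?_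
            exact ((mclm M₂).le_opNorm _).trans
              (mul_le_mul_of_nonneg_left (norm_eabs_sub_eabs_le x y) (norm_nonneg _))
        _ = (K : ℝ) * ‖x - y‖ := by
            rw [hK]
            show _ = (opNorm M₁ + opNorm M₂) * ‖x - y‖
            rw [opNorm_eq_norm_mclm, opNorm_eq_norm_mclm]
            ring
  have hAinv : ∀ v : Fin n → ℝ, (A + Ω).mulVec ((A + Ω)⁻¹.mulVec v) = v := by
    intro v
    rw [Matrix.mulVec_mulVec, Matrix.mul_nonsing_inv _ hinv, Matrix.one_mulVec]
  have hAinv' : ∀ v : Fin n → ℝ, (A + Ω)⁻¹.mulVec ((A + Ω).mulVec v) = v := by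
    intro v
    rw [Matrix.mulVec_mulVec, Matrix.nonsing_inv_mul _ hinv, Matrix.one_mulVec]
  have hfix : ∀ x : Fin n → ℝ,
      (A.mulVec x - B.mulVec (fun i => |x i|) - c = 0) ↔ Function.IsFixedPt f (WithLp.toLp 2 x) := by
    intro x
    constructor
    · intro hx
      have hx' : A.mulVec x = B.mulVec (fun i => |x i|) + c := by
        have := sub_eq_zero.mp (by rwa [sub_sub] at hx)
        exact this
      show WithLp.toLp 2 ((A + Ω)⁻¹.mulVec (Ω.mulVec x + B.mulVec (fun i => |x i|) + c) : Fin n → ℝ) = WithLp.toLp 2 x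
      have heq : Ω.mulVec x + B.mulVec (fun i => |x i|) + c = (A + Ω).mulVec x := by
        rw [Matrix.add_mulVec, hx']
        abel
      rw [heq, hAinv']
    · intro hx
      have hx' : ((A + Ω)⁻¹.mulVec (Ω.mulVec x + B.mulVec (fun i => |x i|) + c) : Fin n → ℝ) = x := congrArg WithLp.ofLp hx
      have h2 : Ω.mulVec x + B.mulVec (fun i => |x i|) + c = (A + Ω).mulVec x := by
        conv_rhs => rw [← hx']
        rw [hAinv]
      rw [Matrix.add_mulVec] at h2
      have h3 : A.mulVec x = B.mulVec (fun i => |x i|) + c := by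
        have h4 := congrArg (fun v => v - Ω.mulVec x) h2
        rw [show Ω.mulVec x + B.mulVec (fun i => |x i|) + c - Ω.mulVec x
            = B.mulVec (fun i => |x i|) + c by abel,
          show A.mulVec x + Ω.mulVec x - Ω.mulVec x = A.mulVec x by abel] at h4
        exact h4.symm
      rw [h3, sub_sub, sub_eq_zero]
  let xs : EuclideanSpace ℝ (Fin n) := ContractingWith.fixedPoint f hcontr
  refine ⟨xs.ofLp, ?_, ?_, ?_⟩
  · exact (hfix xs).mpr (hcontr.fixedPoint_isFixedPt)
  · intro x hx
    exact congrArg WithLp.ofLp (hcontr.fixedPoint_unique ((hfix x).mp hx))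
  · intro x0
    have hsc : ∀ k : ℕ, WithLp.ofLp (f^[k] (WithLp.toLp 2 x0)) =
        (fun x => (A + Ω)⁻¹.mulVec (Ω.mulVec x + B.mulVec (fun i => |x i|) + c))^[k] x0 :=
      fun k => Function.Semiconj.iterate_right (f := WithLp.ofLp) (fun x => rfl) k (WithLp.toLp 2 x0)
    simp only [← hsc]
    exact ((PiLp.continuous_ofLp 2 _).tendsto _).comp (hcontr.tendsto_iterate_fixedPoint (WithLp.toLp 2 x0))
end
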